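/- arXiv:2106.15677 — 3 statements merged into one kernel-verified Lean document; each statement's English description precedes it below -/
import Mathlib

section
/- Fix integers t and n with n ≥ 1 and t² < 4n, and a prime p ≥ 5 with p ∤ n and p ∤ (t² − 4n) (i.e., p is unramified in ℚ(√(t²−4n))). Let k ≠ 2 be a non-negative even integer and m ≥ 1 an integer. Then: if k = 0, n · P_{m(p²−1)}(t, n) ≡ −1 (mod p); and if k ≥ 4, P_{k+m(p²−1)}(t, n) ≡ P_k(t, n) (mod p). -/
open scoped UpperHalfPlane
open Complex Polynomial

noncomputable section

namespace SSTrace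

/-- `P t n k` is the coefficient of `x^(k-2)` in the formal power series expansion
of `(1 - t·x + n·x²)⁻¹`. -/
def P (t n : ℤ) (k : ℕ) : ℤ :=
  PowerSeries.coeff (R := ℤ) (k - 2)
    (PowerSeries.invOfUnit
      (1 - PowerSeries.C (R := ℤ) t * PowerSeries.X + PowerSeries.C (R := ℤ) n * PowerSeries.X ^ 2) 1)

/-!
Write `P_k = U_{k-1}` with `U` the Lucas sequence of `X² - tX + n`, and reduce mod `p`. Over an
algebraic closure of `𝔽_p` the roots `ρ ≠ σ` of `X² - tX + n` are nonzero, and the Frobenius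
permutes them, so `ρ^(p²) = ρ` and `σ^(p²) = σ`. Hence `ρ` and `σ` are `(p² - 1)`-th roots of
unity, and the closed form `(ρ - σ) U_j = ρ^j - σ^j` gives `U_{j+N} = U_j` and `ρσ U_{N-1} = -1`
whenever `p² - 1 ∣ N`.
-/

def lucasU {R : Type*} [CommRing R] (t n : R) : ℕ → R
  | 0 => 0
  | 1 => 1
  | (j + 2) => t * lucasU t n (j + 1) - n * lucasU t n j

section lucasU

variable {R S : Type*} [CommRing R] [CommRing S]

theorem lucasU_add_two (t n : R) (j : ℕ) :
    lucasU t n (j + 2) = t * lucasU t n (j + 1) - n * lucasU t n j := rfl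

theorem map_lucasU (f : R →+* S) (t n : R) (j : ℕ) :
    f (lucasU t n j) = lucasU (f t) (f n) j := by
  induction j using Nat.twoStepInduction with
  | zero => simp [lucasU]
  | one => simp [lucasU]
  | more j ih₀ ih₁ => simp [lucasU_add_two, ih₀, ih₁]

theorem sub_mul_lucasU (ρ σ : R) (j : ℕ) :
    (ρ - σ) * lucasU (ρ + σ) (ρ * σ) j = ρ ^ j - σ ^ j := by
  induction j using Nat.twoStepInduction with
  | zero => simp [lucasU]
  | one => simp [lucasU]
  | more j ih₀ ih₁ =>
    rw [lucasU_add_two]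
    linear_combination (ρ + σ) * ih₁ - ρ * σ * ih₀

variable [IsDomain R] {ρ σ : R} {N : ℕ}

theorem lucasU_add_of_pow_eq_one (hρσ : ρ ≠ σ) (hρ : ρ ^ N = 1) (hσ : σ ^ N = 1) (j : ℕ) :
    lucasU (ρ + σ) (ρ * σ) (j + N) = lucasU (ρ + σ) (ρ * σ) j := by
  refine mul_left_cancel₀ (sub_ne_zero.mpr hρσ) ?_
  rw [sub_mul_lucasU, sub_mul_lucasU, pow_add, pow_add, hρ, hσ, mul_one, mul_one]

theorem mul_lucasU_sub_one_of_pow_eq_one (hρσ : ρ ≠ σ) (hρ : ρ ^ N = 1) (hσ : σ ^ N = 1)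
    (hN : 1 ≤ N) : ρ * σ * lucasU (ρ + σ) (ρ * σ) (N - 1) = -1 := by
  obtain ⟨M, rfl⟩ : ∃ M, N = M + 1 := ⟨N - 1, by omega⟩
  refine mul_left_cancel₀ (sub_ne_zero.mpr hρσ) ?_
  rw [Nat.add_sub_cancel]
  linear_combination ρ * σ * sub_mul_lucasU ρ σ M + σ * hρ - ρ * hσ

end lucasU

theorem P_eq_lucasU (t n : ℤ) {k : ℕ} (hk : 2 ≤ k) : P t n k = lucasU t n (k - 1) := by
  have hmul : (1 - PowerSeries.C t * PowerSeries.X + PowerSeries.C n * PowerSeries.X ^ 2) *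
      PowerSeries.mk (fun j ↦ lucasU t n (j + 1)) = 1 := by
    ext j
    rw [add_mul, sub_mul, one_mul, map_add, map_sub, mul_assoc, mul_assoc,
      PowerSeries.coeff_C_mul, PowerSeries.coeff_C_mul]
    rcases j with _ | _ | j
    · simp [lucasU]
    · simp [PowerSeries.coeff_X_pow_mul', lucasU]
    · simp [PowerSeries.coeff_X_pow_mul', PowerSeries.coeff_succ_X_mul, lucasU_add_two]
  rw [P, inv_unique (PowerSeries.mul_invOfUnit _ 1 (by simp)) hmul, PowerSeries.coeff_mk]
  congr 1
  omega

/-- The Frobenius `x ↦ x^q` fixes `ρ + σ` and `ρσ`, hence permutes `{ρ, σ}`. -/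
theorem pow_expChar_sq_eq_self {K : Type*} [CommRing K] [IsDomain K] {q : ℕ} [ExpChar K q]
    {ρ σ : K} (hsum : (ρ + σ) ^ q = ρ + σ) (hprod : (ρ * σ) ^ q = ρ * σ) : ρ ^ q ^ 2 = ρ := by
  rw [add_pow_expChar] at hsum
  rw [mul_pow] at hprod
  have hroot : (ρ ^ q - ρ) * (ρ ^ q - σ) = 0 := by linear_combination ρ ^ q * hsum - hprod
  rw [sq, pow_mul]
  rcases mul_eq_zero.mp hroot with h | h
  · rw [sub_eq_zero.mp h, sub_eq_zero.mp h]
  · rw [sub_eq_zero.mp h]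
    linear_combination hsum - h

theorem pow_eq_one_of_expChar_sq_sub_one_dvd {K : Type*} [CommRing K] [IsDomain K] {q : ℕ}
    [ExpChar K q] {ρ σ : K} (hρ : ρ ≠ 0) {N : ℕ} (hN : q ^ 2 - 1 ∣ N)
    (hsum : (ρ + σ) ^ q = ρ + σ) (hprod : (ρ * σ) ^ q = ρ * σ) : ρ ^ N = 1 := by
  have hρ1 : ρ ^ (q ^ 2 - 1) = 1 := by
    refine mul_right_cancel₀ hρ ?_
    rw [one_mul, pow_sub_one_mul (pow_ne_zero 2 (expChar_ne_zero K q)),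
      pow_expChar_sq_eq_self hsum hprod]
  obtain ⟨e, rfl⟩ := hN
  rw [pow_mul, hρ1, one_pow]

theorem exists_add_eq_mul_eq {K : Type*} [Field K] [IsAlgClosed K] (s q : K) :
    ∃ ρ σ : K, ρ + σ = s ∧ ρ * σ = q := by
  have hdeg : (X ^ 2 - C s * X + C q).degree = 2 := by compute_degree!
  obtain ⟨ρ, hρ⟩ := IsAlgClosed.exists_root (X ^ 2 - C s * X + C q) (by rw [hdeg]; decide)
  refine ⟨ρ, s - ρ, by ring, ?_⟩
  simp only [IsRoot, eval_add, eval_sub, eval_mul, eval_pow, eval_C, eval_X] at hρ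
  linear_combination -hρ

theorem lucasU_zmod_of_sq_sub_one_dvd {p : ℕ} [Fact p.Prime] {t n : ZMod p} (hn : n ≠ 0)
    (hd : t ^ 2 - 4 * n ≠ 0) {N : ℕ} (hN : p ^ 2 - 1 ∣ N) :
    (∀ j, lucasU t n (j + N) = lucasU t n j) ∧ (1 ≤ N → n * lucasU t n (N - 1) = -1) := by
  let ι := algebraMap (ZMod p) (AlgebraicClosure (ZMod p))
  obtain ⟨ρ, σ, hs, hq⟩ := exists_add_eq_mul_eq (ι t) (ι n)
  have hρσ : ρ ≠ σ := by
    rintro rfl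
    refine hd (ι.injective ?_)
    simp only [map_sub, map_mul, map_pow, map_ofNat, map_zero, ← hs, ← hq]
    ring
  have hρσ0 : ρ * σ ≠ 0 := by
    rw [hq, _root_.map_ne_zero]
    exact hn
  have hfix (a : ZMod p) : ι a ^ p = ι a := by rw [← map_pow, ZMod.pow_card]
  have hρN : ρ ^ N = 1 := pow_eq_one_of_expChar_sq_sub_one_dvd (left_ne_zero_of_mul hρσ0) hN
    (by rw [hs, hfix]) (by rw [hq, hfix])
  have hσN : σ ^ N = 1 := pow_eq_one_of_expChar_sq_sub_one_dvd (right_ne_zero_of_mul hρσ0) hN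
    (by rw [add_comm, hs, hfix]) (by rw [mul_comm, hq, hfix])
  have hmap (j : ℕ) : ι (lucasU t n j) = lucasU (ρ + σ) (ρ * σ) j := by rw [map_lucasU, hs, hq]
  refine ⟨fun j ↦ ι.injective ?_, fun hN1 ↦ ι.injective ?_⟩
  · rw [hmap, hmap, lucasU_add_of_pow_eq_one hρσ hρN hσN]
  · rw [map_mul, hmap, ← hq, mul_lucasU_sub_one_of_pow_eq_one hρσ hρN hσN hN1, map_neg, map_one]

theorem P_unramified_general (p : ℕ) [Fact p.Prime] (t n : ℤ)
    (hpn : ¬ (p : ℤ) ∣ n) (hpd : ¬ (p : ℤ) ∣ (t ^ 2 - 4 * n))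
    (k : ℕ) (m : ℕ) (hm : 1 ≤ m) :
    (k = 0 → n * P t n (m * (p ^ 2 - 1)) ≡ -1 [ZMOD (p : ℤ)]) ∧
    (4 ≤ k → P t n (k + m * (p ^ 2 - 1)) ≡ P t n k [ZMOD (p : ℤ)]) := by
  have hn' : (n : ZMod p) ≠ 0 := by rwa [Ne, ZMod.intCast_zmod_eq_zero_iff_dvd]
  have hd' : (t : ZMod p) ^ 2 - 4 * (n : ZMod p) ≠ 0 := by
    exact_mod_cast mt (ZMod.intCast_zmod_eq_zero_iff_dvd _ p).mp hpd
  obtain ⟨hper, hval⟩ := lucasU_zmod_of_sq_sub_one_dvd hn' hd' (dvd_mul_left (p ^ 2 - 1) m)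
  have hp2 : 2 ^ 2 ≤ p ^ 2 := Nat.pow_le_pow_left (Nat.Prime.two_le Fact.out) 2
  have hN : 3 ≤ m * (p ^ 2 - 1) := le_trans (by omega) (Nat.le_mul_of_pos_left _ hm)
  have hmod (j : ℕ) : ((lucasU t n j : ℤ) : ZMod p) = lucasU (t : ZMod p) n j :=
    map_lucasU (Int.castRingHom (ZMod p)) t n j
  refine ⟨fun _ ↦ ?_, fun hk ↦ ?_⟩ <;> rw [← ZMod.intCast_eq_intCast_iff]
  · rw [P_eq_lucasU t n (by omega)]
    push_cast
    rw [hmod, hval (by omega)]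
  · rw [P_eq_lucasU t n (by omega), P_eq_lucasU t n (by omega), hmod, hmod,
      show k + m * (p ^ 2 - 1) - 1 = k - 1 + m * (p ^ 2 - 1) by omega, hper]

/-- Lemma 2.4 (unramified case): if `p ∤ n`, `p ∤ t² - 4n` and `t² < 4n`, then for even
`k ≠ 2` and `m ≥ 1`: `P_{m(p²-1)}(t,n) ≡ -n⁻¹ (mod p)` when `k = 0`, and
`P_{k+m(p²-1)}(t,n) ≡ P_k(t,n) (mod p)` when `k ≥ 4`. -/
theorem P_unramified (p : ℕ) [Fact p.Prime] (hp : 5 ≤ p) (t n : ℤ) (hn : 1 ≤ n)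
    (hdisc : t ^ 2 < 4 * n) (hpn : ¬ (p : ℤ) ∣ n) (hpd : ¬ (p : ℤ) ∣ (t ^ 2 - 4 * n))
    (k : ℕ) (hke : Even k) (hk2 : k ≠ 2) (m : ℕ) (hm : 1 ≤ m) :
    (k = 0 → n * P t n (m * (p ^ 2 - 1)) ≡ -1 [ZMOD (p : ℤ)]) ∧
    (4 ≤ k → P t n (k + m * (p ^ 2 - 1)) ≡ P t n k [ZMOD (p : ℤ)]) :=
  P_unramified_general p t n hpn hpd k m hm

end SSTrace
end
end

section
/- Let f and g be modular forms on SL₂(ℤ) of even weights k₁, k₂ ≥ 4 respectively. Then F(fg; x) = x^a · (x − 1728)^b · F(f; x) · F(g; x), where a = ⌊(δ(k₁) + δ(k₂))/3⌋ and b = ⌊(ε(k₁) + ε(k₂))/2⌋, with δ(w) := 0, 1, 2 according as w ≡ 0, 4, 2 (mod 6) and ε(w) := 0, 1 according as w ≡ 0, 2 (mod 4). -/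
open scoped UpperHalfPlane
open Complex Polynomial

noncomputable section

namespace SSTrace

/-- `q = exp(2πiz)`. -/
def qq (z : ℍ) : ℂ := Complex.exp (2 * Real.pi * Complex.I * (z : ℂ))

/-- The divisor-sum function `σ_k(n)`. -/
def sigma (k n : ℕ) : ℕ := ∑ d ∈ n.divisors, d ^ k

/-- The normalized Eisenstein series of weight `k`, given by its `q`-expansion
`E_k = 1 - (2k/B_k) ∑_{n ≥ 1} σ_{k-1}(n) qⁿ`. -/
def Eis (k : ℕ) : ℍ → ℂ :=
  fun z => 1 - (2 * k / ((bernoulli' k : ℚ) : ℂ)) *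
    ∑' n : ℕ, (sigma (k - 1) (n + 1) : ℂ) * qq z ^ (n + 1)

/-- The normalized Eisenstein series `E₄`. -/
def E4 : ℍ → ℂ := Eis 4

/-- The normalized Eisenstein series `E₆`. -/
def E6 : ℍ → ℂ := Eis 6

/-- The discriminant cusp form `Δ = (E₄³ - E₆²)/1728`. -/
def Disc : ℍ → ℂ := fun z => (E4 z ^ 3 - E6 z ^ 2) / 1728

/-- The modular `j`-function `j = E₄³/Δ`. -/
def jFun : ℍ → ℂ := fun z => E4 z ^ 3 / Disc z

/-- `δ(w) ∈ {0,1,2}` according as `w ≡ 0, 4, 2 (mod 6)` (for even `w`). -/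
def deltaExp (w : ℕ) : ℕ := if w % 6 = 0 then 0 else if w % 6 = 4 then 1 else 2

/-- `ε(w) ∈ {0,1}` according as `w ≡ 0, 2 (mod 4)` (for even `w`). -/
def epsExp (w : ℕ) : ℕ := if w % 4 = 0 then 0 else 1

/-- `m(w)` with `w = 12·m(w) + 4·δ(w) + 6·ε(w)`. -/
def mExp (w : ℕ) : ℕ := (w - 4 * deltaExp w - 6 * epsExp w) / 12

/-- `HasDivPoly w f F` says that the weight-`w` modular form `f` decomposes as
`f = Δ^m E₄^δ E₆^ε F(j)`, i.e. that `F` is the divisor polynomial of `f`. -/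
def HasDivPoly (w : ℕ) (f : ℍ → ℂ) (F : Polynomial ℂ) : Prop :=
  ∀ z : ℍ, f z = Disc z ^ mExp w * E4 z ^ deltaExp w * E6 z ^ epsExp w * F.eval (jFun z)

/-! Multiplying the decompositions of `f` and `g` leaves surplus factors `E₄³ = jΔ` and
`E₆² = (j - 1728)Δ`, so `F(fg) - X^a (X - 1728)^b F(f) F(g)` vanishes at `j(z)` whenever
`Δ, E₄, E₆` do not vanish at `z`. As `Im z → ∞` we have `E₄, E₆ → 1` and `Δ ~ q`, so `j ~ 1/q`
takes arbitrarily large values at such points, and a polynomial with infinitely many roots is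
zero. -/

open Filter Topology UpperHalfPlane

lemma sigma_le_pow_succ (k n : ℕ) : sigma k n ≤ n ^ (k + 1) := by
  rw [sigma, ← ArithmeticFunction.sigma_apply]
  exact ArithmeticFunction.sigma_le_pow_succ k n

def sigmaSeries (k : ℕ) (x : ℂ) : ℂ := ∑' n : ℕ, (sigma k (n + 1) : ℂ) * x ^ n

lemma sigmaSeries_zero (k : ℕ) : sigmaSeries k 0 = 1 := by
  rw [sigmaSeries, tsum_eq_single 0 fun n hn => by simp [hn]]
  simp [sigma]

lemma continuousAt_sigmaSeries (k : ℕ) : ContinuousAt (sigmaSeries k) 0 := by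
  have hgeom : Summable fun n : ℕ => (n : ℝ) ^ (k + 1) * (1 / 2 : ℝ) ^ n :=
    summable_pow_mul_geometric_of_norm_lt_one _ (by norm_num)
  refine (continuousOn_tsum (fun n => by fun_prop)
    (((summable_nat_add_iff 1).2 hgeom).mul_right 2) fun n x hx => ?_).continuousAt
    (Metric.ball_mem_nhds 0 (by norm_num : (0 : ℝ) < 1 / 2))
  have hx : ‖x‖ ≤ 1 / 2 := (mem_ball_zero_iff.1 hx).le
  have hσ : (sigma k (n + 1) : ℝ) ≤ ((n + 1 : ℕ) : ℝ) ^ (k + 1) := by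
    exact_mod_cast sigma_le_pow_succ k (n + 1)
  calc ‖(sigma k (n + 1) : ℂ) * x ^ n‖ = (sigma k (n + 1) : ℝ) * ‖x‖ ^ n := by
        rw [norm_mul, norm_pow, Complex.norm_natCast]
    _ ≤ ((n + 1 : ℕ) : ℝ) ^ (k + 1) * (1 / 2) ^ n := by gcongr
    _ = ((n + 1 : ℕ) : ℝ) ^ (k + 1) * (1 / 2) ^ (n + 1) * 2 := by ring

lemma Eis_eq (k : ℕ) (z : ℍ) :
    Eis k z = 1 - 2 * k / ((bernoulli' k : ℚ) : ℂ) * (qq z * sigmaSeries (k - 1) (qq z)) := by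
  simp only [Eis, sigmaSeries, ← tsum_mul_left, pow_succ', mul_left_comm (qq z)]

lemma bernoulli'_six : bernoulli' 6 = 1 / 42 := by
  rw [bernoulli'_def]
  norm_num [Finset.sum_range_succ, bernoulli'_eq_zero_of_odd (by decide : Odd 5), Nat.choose]

lemma E4_eq (z : ℍ) : E4 z = 1 + 240 * (qq z * sigmaSeries 3 (qq z)) := by
  rw [E4, Eis_eq, bernoulli'_four]
  norm_num

lemma E6_eq (z : ℍ) : E6 z = 1 - 504 * (qq z * sigmaSeries 5 (qq z)) := by
  rw [E6, Eis_eq, bernoulli'_six]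
  norm_num

-- Expand `1728 Δ = (1 + 240 q S₃)³ - (1 - 504 q S₅)²` with `S_k = sigmaSeries k q`;
-- `172800 = 3·240²`, `13824000 = 240³`, `254016 = 504²`.
lemma Disc_eq (z : ℍ) :
    Disc z = qq z * ((720 * sigmaSeries 3 (qq z) + 1008 * sigmaSeries 5 (qq z) +
      qq z * (172800 * sigmaSeries 3 (qq z) ^ 2 + 13824000 * qq z * sigmaSeries 3 (qq z) ^ 3
        - 254016 * sigmaSeries 5 (qq z) ^ 2)) / 1728) := by
  rw [Disc, E4_eq, E6_eq]
  ring

lemma qq_ne_zero (z : ℍ) : qq z ≠ 0 := Complex.exp_ne_zero _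

lemma tendsto_qq_atImInfty : Tendsto qq atImInfty (𝓝 0) :=
  (qParam_tendsto_atImInfty one_pos).congr fun z => by simp [qq, Function.Periodic.qParam]

lemma tendsto_sigmaSeries_qq (k : ℕ) :
    Tendsto (fun z => sigmaSeries k (qq z)) atImInfty (𝓝 1) :=
  sigmaSeries_zero k ▸ (continuousAt_sigmaSeries k).tendsto.comp tendsto_qq_atImInfty

lemma tendsto_E4_atImInfty : Tendsto E4 atImInfty (𝓝 1) := by
  have h := (tendsto_qq_atImInfty.mul (tendsto_sigmaSeries_qq 3)).const_mul 240 |>.const_add 1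
  simp only [zero_mul, mul_zero, add_zero] at h
  exact h.congr fun z => (E4_eq z).symm

lemma tendsto_E6_atImInfty : Tendsto E6 atImInfty (𝓝 1) := by
  have h := (tendsto_qq_atImInfty.mul (tendsto_sigmaSeries_qq 5)).const_mul 504 |>.const_sub 1
  simp only [zero_mul, mul_zero, sub_zero] at h
  exact h.congr fun z => (E6_eq z).symm

lemma tendsto_Disc_div_qq_atImInfty : Tendsto (fun z => Disc z / qq z) atImInfty (𝓝 1) := by
  have hq := tendsto_qq_atImInfty
  have h3 := tendsto_sigmaSeries_qq 3
  have h5 := tendsto_sigmaSeries_qq 5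
  have h := ((((h3.const_mul 720).add (h5.const_mul 1008)).add (hq.mul
    (((h3.pow 2).const_mul 172800).add ((hq.const_mul 13824000).mul (h3.pow 3)) |>.sub
      ((h5.pow 2).const_mul 254016)))).div_const 1728)
  norm_num at h
  refine h.congr fun z => ?_
  rw [Disc_eq, mul_div_cancel_left₀ _ (qq_ne_zero z)]

lemma eventually_nondegenerate_atImInfty :
    ∀ᶠ z in atImInfty, Disc z ≠ 0 ∧ E4 z ≠ 0 ∧ E6 z ≠ 0 := by
  filter_upwards [tendsto_Disc_div_qq_atImInfty.eventually_ne one_ne_zero,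
    tendsto_E4_atImInfty.eventually_ne one_ne_zero,
    tendsto_E6_atImInfty.eventually_ne one_ne_zero] with z hD h4 h6
  exact ⟨(div_ne_zero_iff.1 hD).1, h4, h6⟩

lemma tendsto_norm_jFun_atImInfty : Tendsto (fun z => ‖jFun z‖) atImInfty atTop := by
  have hjq : Tendsto (fun z => ‖E4 z ^ 3 / (Disc z / qq z)‖) atImInfty (𝓝 1) := by
    simpa using ((tendsto_E4_atImInfty.pow 3).div tendsto_Disc_div_qq_atImInfty
      one_ne_zero).norm
  have hq : Tendsto qq atImInfty (𝓝[≠] 0) :=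
    tendsto_nhdsWithin_iff.2 ⟨tendsto_qq_atImInfty, .of_forall qq_ne_zero⟩
  refine (hjq.pos_mul_atTop one_pos (tendsto_norm_inv_nhdsNE_zero_atTop.comp hq)).congr
    fun z => ?_
  rw [Function.comp_apply, ← norm_mul, jFun, div_div_eq_mul_div, mul_div_right_comm,
    mul_inv_cancel_right₀ (qq_ne_zero z)]

lemma infinite_jFun_image_nondegenerate :
    (jFun '' {z | Disc z ≠ 0 ∧ E4 z ≠ 0 ∧ E6 z ≠ 0}).Infinite := by
  intro hfin
  obtain ⟨B, hB⟩ := (hfin.image norm).bddAbove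
  obtain ⟨z, hz, hzB⟩ := (eventually_nondegenerate_atImInfty.and
    (tendsto_norm_jFun_atImInfty.eventually_gt_atTop B)).exists
  exact (hB ⟨_, ⟨z, hz, rfl⟩, rfl⟩).not_gt hzB

lemma deltaExp_add {k₁ k₂ : ℕ} (he₁ : Even k₁) (he₂ : Even k₂) :
    deltaExp k₁ + deltaExp k₂ = deltaExp (k₁ + k₂) + 3 * ((deltaExp k₁ + deltaExp k₂) / 3) := by
  obtain ⟨c₁, rfl⟩ := he₁
  obtain ⟨c₂, rfl⟩ := he₂
  unfold deltaExp
  split_ifs <;> omega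

lemma epsExp_add {k₁ k₂ : ℕ} (he₁ : Even k₁) (he₂ : Even k₂) :
    epsExp k₁ + epsExp k₂ = epsExp (k₁ + k₂) + 2 * ((epsExp k₁ + epsExp k₂) / 2) := by
  obtain ⟨c₁, rfl⟩ := he₁
  obtain ⟨c₂, rfl⟩ := he₂
  unfold epsExp
  split_ifs <;> omega

lemma weight_eq {w : ℕ} (hw : Even w) (h4 : 4 ≤ w) :
    w = 12 * mExp w + 4 * deltaExp w + 6 * epsExp w := by
  obtain ⟨c, rfl⟩ := hw
  unfold mExp deltaExp epsExp
  split_ifs <;> omega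

lemma mExp_add {k₁ k₂ : ℕ} (he₁ : Even k₁) (he₂ : Even k₂) (h₁ : 4 ≤ k₁) (h₂ : 4 ≤ k₂) :
    mExp (k₁ + k₂) = mExp k₁ + mExp k₂ + (deltaExp k₁ + deltaExp k₂) / 3 +
      (epsExp k₁ + epsExp k₂) / 2 := by
  have := weight_eq he₁ h₁
  have := weight_eq he₂ h₂
  have := weight_eq (he₁.add he₂) (by omega)
  have := deltaExp_add he₁ he₂
  have := epsExp_add he₁ he₂
  omega

lemma mul_factored_eq {R : Type*} [CommRing R] {D e₄ e₆ j : R} (hj : e₄ ^ 3 = j * D)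
    (hj' : e₆ ^ 2 = (j - 1728) * D) {m₁ m₂ d₁ d₂ d e₁ e₂ e a b : ℕ} (hd : d₁ + d₂ = d + 3 * a)
    (he : e₁ + e₂ = e + 2 * b) (x y : R) :
    D ^ m₁ * e₄ ^ d₁ * e₆ ^ e₁ * x * (D ^ m₂ * e₄ ^ d₂ * e₆ ^ e₂ * y) =
      D ^ (m₁ + m₂ + a + b) * e₄ ^ d * e₆ ^ e * (j ^ a * (j - 1728) ^ b * x * y) :=
  calc _ = D ^ (m₁ + m₂) * e₄ ^ (d₁ + d₂) * e₆ ^ (e₁ + e₂) * x * y := by ring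
    _ = D ^ (m₁ + m₂) * e₄ ^ d * e₆ ^ e * (e₄ ^ 3) ^ a * (e₆ ^ 2) ^ b * x * y := by
      rw [hd, he]; ring
    _ = _ := by rw [hj, hj', mul_pow, mul_pow]; ring

lemma E4_pow_three {z : ℍ} (hD : Disc z ≠ 0) : E4 z ^ 3 = jFun z * Disc z :=
  (div_mul_cancel₀ _ hD).symm

lemma E6_sq {z : ℍ} (hD : Disc z ≠ 0) : E6 z ^ 2 = (jFun z - 1728) * Disc z := by
  rw [sub_mul, ← E4_pow_three hD, Disc]
  ring

lemma eval_divPoly_mul_of_nondegenerate {k₁ k₂ : ℕ} (he₁ : Even k₁) (he₂ : Even k₂)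
    (h₁ : 4 ≤ k₁) (h₂ : 4 ≤ k₂) {f g : ℍ → ℂ} {Ff Fg Ffg : ℂ[X]} (hf : HasDivPoly k₁ f Ff)
    (hg : HasDivPoly k₂ g Fg) (hfg : HasDivPoly (k₁ + k₂) (fun z => f z * g z) Ffg) {z : ℍ}
    (hz : Disc z ≠ 0 ∧ E4 z ≠ 0 ∧ E6 z ≠ 0) :
    Ffg.eval (jFun z) = jFun z ^ ((deltaExp k₁ + deltaExp k₂) / 3) *
      (jFun z - 1728) ^ ((epsExp k₁ + epsExp k₂) / 2) * Ff.eval (jFun z) * Fg.eval (jFun z) := by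
  obtain ⟨hD, h4, h6⟩ := hz
  have hprod := (hfg z).symm.trans (congrArg₂ (· * ·) (hf z) (hg z))
  rw [mul_factored_eq (E4_pow_three hD) (E6_sq hD) (deltaExp_add he₁ he₂) (epsExp_add he₁ he₂),
    ← mExp_add he₁ he₂ h₁ h₂] at hprod
  exact mul_left_cancel₀ (by simp [hD, h4, h6]) hprod

/-- Proposition 3.1: the divisor polynomial of a product of modular forms `f, g` of even
weights `k₁, k₂ ≥ 4` satisfies `F(fg;x) = x^a (x-1728)^b F(f;x) F(g;x)` with
`a = ⌊(δ(k₁)+δ(k₂))/3⌋` and `b = ⌊(ε(k₁)+ε(k₂))/2⌋`. -/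
theorem divPoly_mul (k₁ k₂ : ℕ) (he₁ : Even k₁) (he₂ : Even k₂) (h₁ : 4 ≤ k₁) (h₂ : 4 ≤ k₂)
    (f : ModularForm (CongruenceSubgroup.Gamma 1) (k₁ : ℤ))
    (g : ModularForm (CongruenceSubgroup.Gamma 1) (k₂ : ℤ))
    (Ff Fg Ffg : Polynomial ℂ)
    (hf : HasDivPoly k₁ (⇑f) Ff) (hg : HasDivPoly k₂ (⇑g) Fg)
    (hfg : HasDivPoly (k₁ + k₂) (fun z => f z * g z) Ffg) :
    Ffg = X ^ ((deltaExp k₁ + deltaExp k₂) / 3) *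
      (X - C (1728 : ℂ)) ^ ((epsExp k₁ + epsExp k₂) / 2) * Ff * Fg := by
  refine eq_of_infinite_eval_eq _ _ (infinite_jFun_image_nondegenerate.mono ?_)
  rintro _ ⟨z, hz, rfl⟩
  simpa using eval_divPoly_mul_of_nondegenerate he₁ he₂ h₁ h₂ hf hg hfg hz

end SSTrace
end
end

section
/- Let p ≥ 5 be prime and let t, n be integers with n ≥ 1, t² − 4n < 0, p ∤ n, and p ∤ (t² − 4n). Then n · P_{p²−1}(t, n) ≡ −1 (mod p). -/
/-! Over an algebraically closed field of characteristic `p` factor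
`1 - t x + n x² = (1 - ρ x)(1 - ρ' x)`. Since `p ∤ n (t² - 4n)`, the roots `ρ, ρ'` are nonzero and
distinct, and the square of Frobenius fixes them, so `ρ^(p²-1) = ρ'^(p²-1) = 1`. Partial fractions give
`(ρ - ρ') P_{p²-1} = ρ^(p²-2) - ρ'^(p²-2) = ρ⁻¹ - ρ'⁻¹ = (ρ' - ρ) / n`. -/

open scoped UpperHalfPlane
open Complex Polynomial

noncomputable section

namespace PowerSeries

variable {R : Type*} [CommRing R]

theorem one_sub_C_mul_X_mul_mk_pow (a : R) : (1 - C a * X) * mk (a ^ ·) = 1 := by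
  have := congrArg (rescale a) (mk_one_mul_one_sub_eq_one R)
  rw [map_mul, rescale_mk, map_sub, map_one, rescale_X] at this
  simpa [mul_comm] using this

/-- Partial fractions: `(a - b) / ((1 - aX)(1 - bX)) = a / (1 - aX) - b / (1 - bX)`. -/
theorem sub_mul_coeff_of_one_sub_mul_one_sub_mul_eq_one {a b : R} {g : R⟦X⟧}
    (hg : (1 - C a * X) * (1 - C b * X) * g = 1) (m : ℕ) :
    (a - b) * coeff m g = a ^ (m + 1) - b ^ (m + 1) := by
  have hpartial : C (a - b) * g = C a * mk (a ^ ·) - C b * mk (b ^ ·) :=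
    calc C (a - b) * g
        = (C a * ((1 - C a * X) * mk (a ^ ·)) * (1 - C b * X)
            - C b * ((1 - C b * X) * mk (b ^ ·)) * (1 - C a * X)) * g := by
          simp only [one_sub_C_mul_X_mul_mk_pow, map_sub]; ring
      _ = (C a * mk (a ^ ·) - C b * mk (b ^ ·)) * ((1 - C a * X) * (1 - C b * X) * g) := by
          ring
      _ = C a * mk (a ^ ·) - C b * mk (b ^ ·) := by rw [hg, mul_one]
  simpa [sub_mul, pow_succ'] using congrArg (coeff m) hpartial

end PowerSeries

namespace IsAlgClosed

theorem exists_add_eq_and_mul_eq {K : Type*} [Field K] [IsAlgClosed K] (s r : K) :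
    ∃ a b : K, a + b = s ∧ a * b = r := by
  obtain ⟨a, ha⟩ := exists_root (X ^ 2 - C s * X + C r) (by
    rw [show (X ^ 2 - C s * X + C r : K[X]) = C 1 * X ^ 2 + C (-s) * X + C r by simp; ring,
      degree_quadratic one_ne_zero]
    decide)
  refine ⟨a, s - a, add_sub_cancel a s, ?_⟩
  simp only [IsRoot, eval_add, eval_sub, eval_mul, eval_pow, eval_X, eval_C] at ha
  linear_combination -ha

end IsAlgClosed

/-- Frobenius permutes the roots `{a, b}` of `X² - (a + b) X + ab`, so its square fixes `a`. -/
theorem pow_sq_eq_self_of_add_pow_char_of_mul_pow_char {K : Type*} [CommRing K] [IsDomain K]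
    (p : ℕ) [Fact p.Prime] [CharP K p] {a b : K}
    (hsum : (a + b) ^ p = a + b) (hprod : (a * b) ^ p = a * b) : a ^ (p ^ 2) = a := by
  rw [add_pow_char] at hsum
  rw [mul_pow] at hprod
  have hroot : (a ^ p - a) * (a ^ p - b) = 0 := by linear_combination a ^ p * hsum - hprod
  rw [sq, pow_mul]
  rcases mul_eq_zero.mp hroot with h | h
  · rw [sub_eq_zero.mp h, sub_eq_zero.mp h]
  · rw [sub_eq_zero.mp h]
    linear_combination hsum - h

namespace SSTrace

theorem sub_mul_P_add_two {R : Type*} [CommRing R] {t n : ℤ} {a b : R}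
    (hsum : a + b = t) (hprod : a * b = n) (m : ℕ) :
    (a - b) * (P t n (m + 2) : R) = a ^ (m + 1) - b ^ (m + 1) := by
  have hinv := PowerSeries.mul_invOfUnit
    (1 - PowerSeries.C t * PowerSeries.X + PowerSeries.C n * PowerSeries.X ^ 2) 1 (by simp)
  have hfactor : PowerSeries.map (Int.castRingHom R)
      (1 - PowerSeries.C t * PowerSeries.X + PowerSeries.C n * PowerSeries.X ^ 2) =
      (1 - PowerSeries.C a * PowerSeries.X) * (1 - PowerSeries.C b * PowerSeries.X) := by
    simp only [map_add, map_sub, map_mul, map_pow, map_one, PowerSeries.map_C,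
      PowerSeries.map_X, Int.coe_castRingHom, ← hsum, ← hprod]
    ring
  have := PowerSeries.sub_mul_coeff_of_one_sub_mul_one_sub_mul_eq_one
    (by rw [← hfactor, ← map_mul, hinv, map_one]) m
  simpa [P, PowerSeries.coeff_map] using this

theorem intCast_mul_P_add_two_eq_neg_one {K : Type*} [CommRing K] [IsDomain K] {t n : ℤ} {a b : K}
    (hsum : a + b = t) (hprod : a * b = n) (hab : a ≠ b) {m : ℕ}
    (ha : a ^ (m + 2) = 1) (hb : b ^ (m + 2) = 1) : (n : K) * P t n (m + 2) = -1 := by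
  refine mul_left_cancel₀ (sub_ne_zero.mpr hab) ?_
  calc (a - b) * ((n : K) * P t n (m + 2))
      = a * b * ((a - b) * P t n (m + 2)) := by rw [hprod]; ring
    _ = a ^ (m + 2) * b - b ^ (m + 2) * a := by rw [sub_mul_P_add_two hsum hprod]; ring
    _ = (a - b) * -1 := by rw [ha, hb]; ring

theorem intCast_mul_P_pow_sub_one {K : Type*} [Field K] [IsAlgClosed K] (p : ℕ) [Fact p.Prime]
    [CharP K p] {t n : ℤ} (hn : (n : K) ≠ 0) (hdisc : ((t ^ 2 - 4 * n : ℤ) : K) ≠ 0) :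
    (n : K) * P t n (p ^ 2 - 1) = -1 := by
  obtain ⟨a, b, hsum, hprod⟩ := IsAlgClosed.exists_add_eq_and_mul_eq (t : K) (n : K)
  have hab : a ≠ b := by
    have hsq : (a - b) ^ 2 = ((t ^ 2 - 4 * n : ℤ) : K) := by
      push_cast
      linear_combination (a + b + t) * hsum - 4 * hprod
    rwa [← sub_ne_zero, ← pow_ne_zero_iff two_ne_zero, hsq]
  have hfrob (z : ℤ) : (z : K) ^ p = z := by rw [← frobenius_def, map_intCast]
  obtain ⟨m, hm⟩ : ∃ m, p ^ 2 = m + 3 := ⟨p ^ 2 - 3, by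
    have : 4 ≤ p ^ 2 := Nat.pow_le_pow_left (Fact.out : p.Prime).two_le 2
    omega⟩
  have hunit {x : K} (hx : x ≠ 0) (h : x ^ (p ^ 2) = x) : x ^ (m + 2) = 1 :=
    mul_left_cancel₀ hx (by rw [← pow_succ', ← hm, h, mul_one])
  have ha := pow_sq_eq_self_of_add_pow_char_of_mul_pow_char p
    (by rw [hsum, hfrob]) (by rw [hprod, hfrob])
  have hb := pow_sq_eq_self_of_add_pow_char_of_mul_pow_char p (a := b) (b := a)
    (by rw [add_comm, hsum, hfrob]) (by rw [mul_comm, hprod, hfrob])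
  rw [show p ^ 2 - 1 = m + 2 by omega]
  exact intCast_mul_P_add_two_eq_neg_one hsum hprod hab
    (hunit (left_ne_zero_of_mul (hprod ▸ hn)) ha) (hunit (right_ne_zero_of_mul (hprod ▸ hn)) hb)

theorem n_mul_P_pow_sub_one_general (p : ℕ) [Fact p.Prime] (t n : ℤ) (hpn : ¬ (p : ℤ) ∣ n)
    (hpd : ¬ (p : ℤ) ∣ (t ^ 2 - 4 * n)) :
    n * P t n (p ^ 2 - 1) ≡ -1 [ZMOD (p : ℤ)] := by
  rw [← CharP.intCast_eq_intCast (AlgebraicClosure (ZMod p)) p]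
  push_cast
  exact intCast_mul_P_pow_sub_one p (by rwa [Ne, CharP.intCast_eq_zero_iff _ p])
    (by rwa [Ne, CharP.intCast_eq_zero_iff _ p])

/-- If `t² - 4n < 0`, `p ∤ n` and `p ∤ t² - 4n`, then `n · P_{p²-1}(t,n) ≡ -1 (mod p)`. -/
theorem n_mul_P_pow_sub_one (p : ℕ) [Fact p.Prime] (hp : 5 ≤ p) (t n : ℤ) (hn : 1 ≤ n)
    (hdisc : t ^ 2 - 4 * n < 0) (hpn : ¬ (p : ℤ) ∣ n)
    (hpd : ¬ (p : ℤ) ∣ (t ^ 2 - 4 * n)) :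
    n * P t n (p ^ 2 - 1) ≡ -1 [ZMOD (p : ℤ)] :=
  n_mul_P_pow_sub_one_general p t n hpn hpd

end SSTrace
end
end
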